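/- Suppose that for every ξ ∈ S¹, either P†(ξ) = 0 (as a vector in ℝ³) or σ(ξ) = 0. Then the star configuration is symmetric: m is even and there exists a fixed-point-free involution τ of {1, …, m} such that γ_{τ(i)} = −γ_i and c_{τ(i)} = c_i for all i. (Algebraic core of the theorem that a star transform on symmetric 2-tensor fields is invertible if and only if it is not symmetric.) -/

import Mathlib

noncomputable section

open MeasureTheory

/-- Dot product in `ℝ²`. -/
def dot2 (a b : ℝ × ℝ) : ℝ := a.1 * b.1 + a.2 * b.2

/-- The rotation `w ↦ w^⊥ = (−w2, w1)`. -/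
def perp2 (w : ℝ × ℝ) : ℝ × ℝ := (-w.2, w.1)

/-- The symmetric tensor `w² = (w1², w1 w2, w2²)`, identified with a vector in `ℝ³`. -/
def tsq (w : ℝ × ℝ) : Fin 3 → ℝ := ![w.1 ^ 2, w.1 * w.2, w.2 ^ 2]

/-- The symmetric tensor `w ⊙ w^⊥ = (−w1 w2, (w1² − w2²)/2, w1 w2)`. -/
def todot (w : ℝ × ℝ) : Fin 3 → ℝ := ![-(w.1 * w.2), (w.1 ^ 2 - w.2 ^ 2) / 2, w.1 * w.2]

/-- The vector `γ(ξ) = −Σᵢ cᵢ γᵢ² / (ξ·γᵢ)`. -/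
def gammaVec (m : ℕ) (γ : Fin m → ℝ × ℝ) (c : Fin m → ℝ) (ξ : ℝ × ℝ) : Fin 3 → ℝ :=
  -∑ i : Fin m, (c i / dot2 ξ (γ i)) • tsq (γ i)

/-- The vector `γ†(ξ) = −Σᵢ cᵢ (γᵢ ⊙ γᵢ^⊥) / (ξ·γᵢ)`. -/
def gammaDag (m : ℕ) (γ : Fin m → ℝ × ℝ) (c : Fin m → ℝ) (ξ : ℝ × ℝ) : Fin 3 → ℝ :=
  -∑ i : Fin m, (c i / dot2 ξ (γ i)) • todot (γ i)

/-- The vector `γ^⊥(ξ) = −Σᵢ cᵢ (γᵢ^⊥)² / (ξ·γᵢ)`. -/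
def gammaPerp (m : ℕ) (γ : Fin m → ℝ × ℝ) (c : Fin m → ℝ) (ξ : ℝ × ℝ) : Fin 3 → ℝ :=
  -∑ i : Fin m, (c i / dot2 ξ (γ i)) • tsq (perp2 (γ i))

/-- `κᵢ(ξ) = ∏_{j ≠ i} (ξ·γⱼ)`. -/
def kappaI (m : ℕ) (γ : Fin m → ℝ × ℝ) (i : Fin m) (ξ : ℝ × ℝ) : ℝ :=
  ∏ j ∈ Finset.univ.erase i, dot2 ξ (γ j)

/-- The `ℝ³`-valued polynomial `P†(ξ) = Σᵢ cᵢ κᵢ(ξ) (γᵢ ⊙ γᵢ^⊥)`. -/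
def Pdag (m : ℕ) (γ : Fin m → ℝ × ℝ) (c : Fin m → ℝ) (ξ : ℝ × ℝ) : Fin 3 → ℝ :=
  ∑ i : Fin m, (c i * kappaI m γ i ξ) • todot (γ i)

/-- The scalar polynomial `σ(ξ) = Σᵢ cᵢ κᵢ(ξ)`. -/
def sigmaP (m : ℕ) (γ : Fin m → ℝ × ℝ) (c : Fin m → ℝ) (ξ : ℝ × ℝ) : ℝ :=
  ∑ i : Fin m, c i * kappaI m γ i ξ

/-!
For each `i`, evaluating at `ξ = γᵢ^⊥` kills every `κₗ` with `l ≠ i`, so `P†(ξ)` and `σ(ξ)` are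
`cᵢ κᵢ(ξ)` times a nonzero factor; hence `κᵢ(γᵢ^⊥) = 0`: some `γⱼ`, `j ≠ i`, is
orthogonal to `γᵢ^⊥`, so `γⱼ = −γᵢ`.
This pairing is a fixed-point-free involution, so `m` is even. Every component of `P†` and `σ` has
the form `Σₗ cₗ wₗ κₗ(ξ)` with `wⱼ = wᵢ ≠ 0` whenever `γⱼ = −γᵢ` (`wₗ` a component of
`γₗ ⊙ γₗ^⊥`, or `1`). Moving `ξ` along the unit circle from `γᵢ^⊥` towards `γᵢ` gives
`ξ·γᵢ = sin t = −ξ·γⱼ`, so such a sum factors as `sin t · G(t)` with `G` continuous and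
`G(0) = (cⱼ − cᵢ) wᵢ ∏_{k ≠ i, j} (γᵢ^⊥·γₖ)`. One of the sums vanishes for arbitrarily small
`t ≠ 0`, hence `G(0) = 0` and `cⱼ = cᵢ`.
-/

open Filter Topology Finset

lemma even_card_of_involutive {α : Type*} [Fintype α] [DecidableEq α] {f : α → α}
    (hf : Function.Involutive f) (hne : ∀ a, f a ≠ a) : Even (Fintype.card α) := by
  have hsq : hf.toPerm f ^ 2 ^ 1 = 1 := by
    ext a
    simp [sq, hf a]
  have hsupp : (hf.toPerm f).supportᶜ = ∅ := by
    ext a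
    simp [hne a]
  have hmod := Equiv.Perm.card_compl_support_modEq hsq
  rw [hsupp, card_empty] at hmod
  exact Nat.even_iff.mpr hmod.symm

lemma eq_zero_of_tendsto_of_frequently_mul_eq_zero {X R : Type*} [MulZeroClass R]
    [NoZeroDivisors R] [TopologicalSpace R] [T2Space R] {l : Filter X} {f g : X → R} {b : R}
    (hg : Tendsto g l (𝓝 b)) (hf : ∀ᶠ t in l, f t ≠ 0) (h : ∃ᶠ t in l, f t * g t = 0) :
    b = 0 :=
  tendsto_nhds_unique_of_frequently_eq hg tendsto_const_nhds <|
    (h.and_eventually hf).mono fun _ ⟨h0, hne⟩ => (mul_eq_zero.1 h0).resolve_left hne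

section ProdErase

variable {ι R : Type*} [Fintype ι] [DecidableEq ι]

lemma sum_mul_prod_erase_of_eq_neg [CommRing R] (a d : ι → R) {i j : ι} (hij : j ≠ i)
    (hd : d j = -d i) :
    ∑ l, a l * ∏ k ∈ univ.erase l, d k =
      d i * ((a j - a i) * ∏ k ∈ (univ.erase i).erase j, d k -
        d i * ∑ l ∈ (univ.erase i).erase j, a l * ∏ k ∈ ((univ.erase i).erase j).erase l, d k) := by
  set s := (univ.erase i).erase j
  have hj : j ∈ univ.erase i := mem_erase.2 ⟨hij, mem_univ j⟩
  have hi : i ∈ univ.erase j := mem_erase.2 ⟨hij.symm, mem_univ i⟩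
  have hκi : ∏ k ∈ univ.erase i, d k = d j * ∏ k ∈ s, d k := (mul_prod_erase _ _ hj).symm
  have hκj : ∏ k ∈ univ.erase j, d k = d i * ∏ k ∈ s, d k := by
    rw [← mul_prod_erase _ _ hi, erase_right_comm]
  have hκl : ∀ l ∈ s, ∏ k ∈ univ.erase l, d k = d i * d j * ∏ k ∈ s.erase l, d k := by
    intro l hl
    obtain ⟨hlj, hli⟩ : l ≠ j ∧ l ≠ i := by simpa [s] using hl
    have hs : ((univ.erase l).erase i).erase j = s.erase l := by
      ext k
      simp only [s, mem_erase, mem_univ, and_true]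
      tauto
    rw [mul_assoc, ← mul_prod_erase _ _ (by simpa using hli.symm : i ∈ univ.erase l),
      ← mul_prod_erase _ _ (by simpa [hij] using hlj.symm : j ∈ (univ.erase l).erase i), hs]
  have hrest : ∑ l ∈ s, a l * ∏ k ∈ univ.erase l, d k =
      -(d i * (d i * ∑ l ∈ s, a l * ∏ k ∈ s.erase l, d k)) := by
    rw [mul_sum, mul_sum, ← sum_neg_distrib]
    exact sum_congr rfl fun l hl => by rw [hκl l hl, hd]; ring
  rw [← add_sum_erase _ _ (mem_univ i), ← add_sum_erase _ _ hj, hκi, hκj, hrest, hd]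
  ring

variable [CommRing R] [NoZeroDivisors R] [TopologicalSpace R] [IsTopologicalRing R] [T2Space R]

lemma sub_mul_prod_eq_zero_of_frequently {X : Type*} [TopologicalSpace X] {x : X}
    {d : X → ι → R} (hd : ContinuousAt d x) (a : ι → R) {i j : ι} (hij : j ≠ i)
    (hdj : ∀ t, d t j = -d t i) (hdx : d x i = 0) (hdi : ∀ᶠ t in 𝓝[≠] x, d t i ≠ 0)
    (h : ∃ᶠ t in 𝓝[≠] x, ∑ l, a l * ∏ k ∈ univ.erase l, d t k = 0) :
    (a j - a i) * ∏ k ∈ (univ.erase i).erase j, d x k = 0 := by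
  set s := (univ.erase i).erase j
  let G : (ι → R) → R := fun e =>
    (a j - a i) * ∏ k ∈ s, e k - e i * ∑ l ∈ s, a l * ∏ k ∈ s.erase l, e k
  have hG : Continuous G := by fun_prop
  have hGx : G (d x) = (a j - a i) * ∏ k ∈ s, d x k := by simp [G, hdx]
  refine hGx ▸ eq_zero_of_tendsto_of_frequently_mul_eq_zero
    ((hG.continuousAt.tendsto.comp hd.tendsto).mono_left nhdsWithin_le_nhds) hdi ?_
  exact h.mono fun t ht => by rwa [sum_mul_prod_erase_of_eq_neg a (d t) hij (hdj t)] at ht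

end ProdErase

lemma todot_neg (e : ℝ × ℝ) : todot (-e) = todot e := by
  funext k
  fin_cases k <;> simp [todot]

lemma todot_ne_zero {e : ℝ × ℝ} (he : e.1 ^ 2 + e.2 ^ 2 = 1) : todot e ≠ 0 := by
  intro h
  have h1 := congrFun h 1
  have h2 := congrFun h 2
  simp only [todot, Matrix.cons_val_one, Matrix.cons_val_zero, Matrix.cons_val, Pi.zero_apply,
    div_eq_zero_iff, OfNat.ofNat_ne_zero, or_false, mul_eq_zero] at h1 h2
  rcases h2 with h2 | h2 <;> rw [h2] at h1 <;> nlinarith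

lemma neg_ne_self_of_unit {e : ℝ × ℝ} (he : e.1 ^ 2 + e.2 ^ 2 = 1) : -e ≠ e := by
  intro h
  obtain ⟨h1, h2⟩ := Prod.ext_iff.1 h
  simp only [Prod.fst_neg, Prod.snd_neg] at h1 h2
  nlinarith

lemma eq_or_eq_neg_of_dot2_perp2_eq_zero {e v : ℝ × ℝ} (he : e.1 ^ 2 + e.2 ^ 2 = 1)
    (hv : v.1 ^ 2 + v.2 ^ 2 = 1) (h : dot2 (perp2 e) v = 0) : v = e ∨ v = -e := by
  simp only [dot2, perp2] at h
  set s := e.1 * v.1 + e.2 * v.2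
  have h1 : v.1 = s * e.1 := by linear_combination -v.1 * he - e.2 * h
  have h2 : v.2 = s * e.2 := by linear_combination -v.2 * he + e.1 * h
  have hs : (s - 1) * (s + 1) = 0 := by
    linear_combination (-(v.1 + s * e.1)) * h1 + (-(v.2 + s * e.2)) * h2 + hv - s ^ 2 * he
  rcases mul_eq_zero.1 hs with hs | hs
  · left
    ext <;> simp [h1, h2, sub_eq_zero.1 hs]
  · right
    ext <;> simp [h1, h2, eq_neg_of_add_eq_zero_left hs]

lemma dot2_neg (a b : ℝ × ℝ) : dot2 a (-b) = -dot2 a b := by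
  simp only [dot2, Prod.fst_neg, Prod.snd_neg]
  ring

lemma dot2_perp2_self (e : ℝ × ℝ) : dot2 (perp2 e) e = 0 := by
  simp only [dot2, perp2]
  ring

lemma dot2_self_of_unit {e : ℝ × ℝ} (he : e.1 ^ 2 + e.2 ^ 2 = 1) : dot2 e e = 1 := by
  simp only [dot2, ← he]
  ring

def circleThroughPerp (e : ℝ × ℝ) (t : ℝ) : ℝ × ℝ := Real.cos t • perp2 e + Real.sin t • e

lemma circleThroughPerp_unit {e : ℝ × ℝ} (he : e.1 ^ 2 + e.2 ^ 2 = 1) (t : ℝ) :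
    (circleThroughPerp e t).1 ^ 2 + (circleThroughPerp e t).2 ^ 2 = 1 := by
  simp only [circleThroughPerp, perp2, Prod.fst_add, Prod.snd_add, Prod.smul_fst,
    Prod.smul_snd, smul_eq_mul]
  linear_combination he + (e.1 ^ 2 + e.2 ^ 2) * Real.sin_sq_add_cos_sq t

lemma dot2_circleThroughPerp (e v : ℝ × ℝ) (t : ℝ) :
    dot2 (circleThroughPerp e t) v = Real.cos t * dot2 (perp2 e) v + Real.sin t * dot2 e v := by
  simp only [circleThroughPerp, dot2, perp2, Prod.fst_add, Prod.snd_add, Prod.smul_fst,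
    Prod.smul_snd, smul_eq_mul]
  ring

def kappaSum (m : ℕ) (γ : Fin m → ℝ × ℝ) (c w : Fin m → ℝ) (ξ : ℝ × ℝ) : ℝ :=
  ∑ l, c l * kappaI m γ l ξ * w l

lemma Pdag_apply (m : ℕ) (γ : Fin m → ℝ × ℝ) (c : Fin m → ℝ) (ξ : ℝ × ℝ) (k : Fin 3) :
    Pdag m γ c ξ k = kappaSum m γ c (fun l => todot (γ l) k) ξ := by
  simp [Pdag, kappaSum, Finset.sum_apply]

lemma sigmaP_eq_kappaSum (m : ℕ) (γ : Fin m → ℝ × ℝ) (c : Fin m → ℝ) :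
    sigmaP m γ c = kappaSum m γ c 1 := by
  funext ξ
  simp [sigmaP, kappaSum]

lemma kappaSum_perp2 {m : ℕ} (γ : Fin m → ℝ × ℝ) (c w : Fin m → ℝ) (i : Fin m) :
    kappaSum m γ c w (perp2 (γ i)) = c i * kappaI m γ i (perp2 (γ i)) * w i := by
  refine sum_eq_single i (fun l _ hli => ?_) (by simp)
  have : kappaI m γ l (perp2 (γ i)) = 0 :=
    prod_eq_zero (mem_erase.2 ⟨hli.symm, mem_univ i⟩) (dot2_perp2_self _)
  simp [this]

lemma coeff_eq_of_frequently_kappaSum_eq_zero {m : ℕ} {γ : Fin m → ℝ × ℝ} {c w : Fin m → ℝ}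
    {i j : Fin m} (hui : (γ i).1 ^ 2 + (γ i).2 ^ 2 = 1) (hij : j ≠ i) (hγ : γ j = -γ i)
    (hperp : ∀ k, k ≠ i → k ≠ j → dot2 (perp2 (γ i)) (γ k) ≠ 0) (hw : w j = w i) (hwi : w i ≠ 0)
    (h : ∃ᶠ t in 𝓝[≠] 0, kappaSum m γ c w (circleThroughPerp (γ i) t) = 0) :
    c j = c i := by
  set d : ℝ → Fin m → ℝ := fun t k => dot2 (circleThroughPerp (γ i) t) (γ k)
  have hdi : ∀ t, d t i = Real.sin t := fun t => by
    simp [d, dot2_circleThroughPerp, dot2_perp2_self, dot2_self_of_unit hui]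
  have hdj : ∀ t, d t j = -d t i := fun t => by simp only [d, hγ, dot2_neg]
  have hd : Continuous d := by
    simp only [d, dot2_circleThroughPerp]
    fun_prop
  have hsin : ∀ᶠ t in 𝓝[≠] (0 : ℝ), d t i ≠ 0 := by
    simpa [hdi] using (Real.hasDerivAt_sin 0).eventually_ne (by simp)
  have hprod : ∏ k ∈ (univ.erase i).erase j, d 0 k ≠ 0 := by
    refine prod_ne_zero_iff.2 fun k hk => ?_
    obtain ⟨hkj, hki⟩ : k ≠ j ∧ k ≠ i := by simpa using hk
    simpa [d, dot2_circleThroughPerp] using hperp k hki hkj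
  have hsum : ∀ t, kappaSum m γ c w (circleThroughPerp (γ i) t) =
      ∑ l, c l * w l * ∏ k ∈ univ.erase l, d t k :=
    fun t => sum_congr rfl fun l _ => mul_right_comm _ _ _
  have key := sub_mul_prod_eq_zero_of_frequently hd.continuousAt (fun l => c l * w l) hij hdj
    (by simp [hdi]) hsin (h.mono fun t ht => (hsum t).symm.trans ht)
  rw [hw, ← sub_mul] at key
  simpa [sub_eq_zero, hwi, hprod] using key

section Singular

variable {m : ℕ} {γ : Fin m → ℝ × ℝ} {c : Fin m → ℝ}

lemma exists_eq_neg_of_singular (hunit : ∀ i, (γ i).1 ^ 2 + (γ i).2 ^ 2 = 1)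
    (hdist : Function.Injective γ) (hc : ∀ i, c i ≠ 0)
    (hsing : ∀ ξ : ℝ × ℝ, ξ.1 ^ 2 + ξ.2 ^ 2 = 1 → Pdag m γ c ξ = 0 ∨ sigmaP m γ c ξ = 0)
    (i : Fin m) : ∃ j, γ j = -γ i := by
  obtain ⟨k, hk⟩ : ∃ k, todot (γ i) k ≠ 0 := Function.ne_iff.1 (todot_ne_zero (hunit i))
  have hperp : (perp2 (γ i)).1 ^ 2 + (perp2 (γ i)).2 ^ 2 = 1 := by
    simp only [perp2]
    linear_combination hunit i
  have hκ : kappaI m γ i (perp2 (γ i)) = 0 := by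
    rcases hsing _ hperp with h | h
    · have hk0 := congrFun h k
      rw [Pdag_apply, kappaSum_perp2] at hk0
      simpa [hc i, hk] using hk0
    · rw [sigmaP_eq_kappaSum, kappaSum_perp2] at h
      simpa [hc i] using h
  obtain ⟨j, hj, hj0⟩ := prod_eq_zero_iff.1 hκ
  refine ⟨j, (eq_or_eq_neg_of_dot2_perp2_eq_zero (hunit i) (hunit j) hj0).resolve_left ?_⟩
  exact fun h => (mem_erase.1 hj).1 (hdist h)

lemma coeff_eq_of_singular (hunit : ∀ i, (γ i).1 ^ 2 + (γ i).2 ^ 2 = 1)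
    (hdist : Function.Injective γ)
    (hsing : ∀ ξ : ℝ × ℝ, ξ.1 ^ 2 + ξ.2 ^ 2 = 1 → Pdag m γ c ξ = 0 ∨ sigmaP m γ c ξ = 0)
    {i j : Fin m} (hij : j ≠ i) (hγ : γ j = -γ i) : c j = c i := by
  have hperp : ∀ k, k ≠ i → k ≠ j → dot2 (perp2 (γ i)) (γ k) ≠ 0 := fun k hki hkj h =>
    (eq_or_eq_neg_of_dot2_perp2_eq_zero (hunit i) (hunit k) h).elim
      (fun h => hki (hdist h)) (fun h => hkj (hdist (h.trans hγ.symm)))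
  have hfreq := frequently_or_distrib.1 <| (Eventually.of_forall fun t =>
    hsing _ (circleThroughPerp_unit (hunit i) t) : ∀ᶠ _ in 𝓝[≠] (0 : ℝ), _).frequently
  rcases hfreq with h | h
  · obtain ⟨k, hk⟩ : ∃ k, todot (γ i) k ≠ 0 := Function.ne_iff.1 (todot_ne_zero (hunit i))
    refine coeff_eq_of_frequently_kappaSum_eq_zero (w := fun l => todot (γ l) k) (hunit i) hij hγ
      hperp (by simp only [hγ, todot_neg]) hk (h.mono fun t ht => ?_)
    rw [← Pdag_apply, ht, Pi.zero_apply]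
  · refine coeff_eq_of_frequently_kappaSum_eq_zero (w := 1) (hunit i) hij hγ hperp rfl one_ne_zero
      (h.mono fun t ht => ?_)
    rwa [← sigmaP_eq_kappaSum]

end Singular

theorem non_invertible_implies_symmetric_general
    (m : ℕ) (γ : Fin m → ℝ × ℝ) (c : Fin m → ℝ)
    (hunit : ∀ i, (γ i).1 ^ 2 + (γ i).2 ^ 2 = 1)
    (hdist : Function.Injective γ)
    (hc : ∀ i, c i ≠ 0)
    (hsing : ∀ ξ : ℝ × ℝ, ξ.1 ^ 2 + ξ.2 ^ 2 = 1 →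
      Pdag m γ c ξ = 0 ∨ sigmaP m γ c ξ = 0) :
    Even m ∧
      ∃ τ : Equiv.Perm (Fin m),
        (∀ i, τ (τ i) = i) ∧ (∀ i, τ i ≠ i) ∧
          ∀ i, γ (τ i) = -γ i ∧ c (τ i) = c i := by
  choose τ hτ using exists_eq_neg_of_singular hunit hdist hc hsing
  have hinv : Function.Involutive τ := fun i => hdist (by rw [hτ, hτ, neg_neg])
  have hne : ∀ i, τ i ≠ i := fun i h => neg_ne_self_of_unit (hunit i) (by rw [← hτ i, h])
  refine ⟨by simpa using even_card_of_involutive hinv hne, hinv.toPerm τ, hinv, hne, fun i => ?_⟩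
  exact ⟨hτ i, coeff_eq_of_singular hunit hdist hsing (hne i) (hτ i)⟩

/-- if for every unit vector `ξ` either `P†(ξ) = 0` or `σ(ξ) = 0`, then
the star configuration is symmetric: `m` is even and there is a fixed-point-free
involution `τ` with `γ_{τ(i)} = −γᵢ` and `c_{τ(i)} = cᵢ`. -/
theorem non_invertible_implies_symmetric
    (m : ℕ) (hm : 1 ≤ m) (γ : Fin m → ℝ × ℝ) (c : Fin m → ℝ)
    (hunit : ∀ i, (γ i).1 ^ 2 + (γ i).2 ^ 2 = 1)
    (hdist : Function.Injective γ)
    (hc : ∀ i, c i ≠ 0)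
    (hsing : ∀ ξ : ℝ × ℝ, ξ.1 ^ 2 + ξ.2 ^ 2 = 1 →
      Pdag m γ c ξ = 0 ∨ sigmaP m γ c ξ = 0) :
    Even m ∧
      ∃ τ : Equiv.Perm (Fin m),
        (∀ i, τ (τ i) = i) ∧ (∀ i, τ i ≠ i) ∧
          ∀ i, γ (τ i) = -γ i ∧ c (τ i) = c i :=
  non_invertible_implies_symmetric_general m γ c hunit hdist hc hsing
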